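/- arXiv:2605.07289 — 8 statements merged into one kernel-verified Lean document; each statement's English description precedes it below -/
import Mathlib

section
/- Let Σ be an alphabet and let w be a word over Σ, let ℓ ≥ 1, and let A, B ⊆ Σ* be languages with [] ∉ B. Let N_C be an ε-NFA over Σ with state type σ_C whose accepted language is C, and let N_D be an ε-NFA over Σ with state type σ_D whose accepted language is D. Assume: (i) for all positions 0 ≤ p < q such that the suffix of w starting at position q has length at least ℓ+1, that suffix is not a prefix of the suffix of w starting at position p; and (ii) every word in D has length at least ℓ+1. For an ε-NFA N, a state q and a set of states F, write N[start:={q}] for N with its start set replaced by {q} and N[accept:=F] for N with its accepting set replaced by F. Then the following are equivalent: (1) there exist a ∈ A, b ∈ B, c ∈ C, d ∈ D with w = a ++ b ++ c ++ b ++ d; (2) at least one of the following holds: (2a) [XYYZ case] there exist an accepting state f_C of N_C, a state q_D of N_D, and words a, u, z with w = a ++ u ++ u ++ z, a ∈ A, u ∈ B · (accepts(N_C[accept:={f_C}]) ∩ accepts(N_D[accept:={q_D}])), and z ∈ accepts(N_D[start:={q_D}]); (2b) [branching case] there exist a state q_C of N_C, a state q_D of N_D, and words a, u, c', d' with w = a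 ++ u ++ c' ++ u ++ d', a ∈ A, u ∈ B · (accepts(N_C[accept:={q_C}]) ∩ accepts(N_D[accept:={q_D}])), c' ∈ accepts(N_C[start:={q_C}]), d' ∈ accepts(N_D[start:={q_D}]), both c' and d' are nonempty, and the first letters of c' and d' are different. -/
/-!
Write `s` for the longest common prefix of `c` and `d`. If `c` is a prefix of `d`, then
`w = a ++ (b ++ c) ++ (b ++ c) ++ z`, and the run of `N_D` on `d` splits at the state reached
after `c`. If `c` and `d` diverge after `s`, the repeated factor is `b ++ s` and both runs split
after `s`. The remaining case, `d` a proper prefix of `c`, is impossible: the final `d`, of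
length at least `ℓ + 1`, would be a prefix of the suffix of `w` starting at the earlier `d`.
The converse direction just concatenates runs.
-/

def setMul {α : Type*} (L₁ L₂ : Set (List α)) : Set (List α) :=
  {x | ∃ u ∈ L₁, ∃ v ∈ L₂, x = u ++ v}

namespace εNFA

variable {α σ : Type*}

theorem mem_accepts {M : εNFA α σ} {x : List α} : x ∈ M.accepts ↔ ∃ f ∈ M.accept, f ∈ M.eval x :=
  Iff.rfl

-- `εClosure` is an inductive family indexed by the whole automaton, so updating `start` or
-- `accept` changes it only up to this propositional equality, not definitionally.
theorem εClosure_subset_of_step_eq {M M' : εNFA α σ} (h : M.step = M'.step) (S : Set σ) :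
    M.εClosure S ⊆ M'.εClosure S := by
  intro s hs
  induction hs with
  | base s hs => exact εClosure.base s hs
  | step s t ht _ ih => exact εClosure.step s t (h ▸ ht) ih

theorem evalFrom_eq_of_step_eq {M M' : εNFA α σ} (h : M.step = M'.step) :
    M.evalFrom = M'.evalFrom := by
  have hε : M.εClosure = M'.εClosure := funext fun S =>
    (εClosure_subset_of_step_eq h S).antisymm (εClosure_subset_of_step_eq h.symm S)
  have hstep : M.stepSet = M'.stepSet := by
    funext S a
    simp only [stepSet, h, hε]
  funext S x
  simp only [evalFrom, hstep, hε]

theorem mem_evalFrom_append_iff {M : εNFA α σ} {s u : σ} {x y : List α} :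
    u ∈ M.evalFrom {s} (x ++ y) ↔ ∃ t ∈ M.evalFrom {s} x, u ∈ M.evalFrom {t} y := by
  simp only [mem_evalFrom_iff_exists_path, List.reduceOption_eq_append_iff]
  constructor
  · rintro ⟨_, ⟨x', y', rfl, hx, hy⟩, hpath⟩
    obtain ⟨t, hxt, hty⟩ := M.isPath_append.1 hpath
    exact ⟨t, ⟨x', hx, hxt⟩, y', hy, hty⟩
  · rintro ⟨t, ⟨x', hx, hxt⟩, y', hy, hty⟩
    exact ⟨x' ++ y', ⟨x', y', rfl, hx, hy⟩, M.isPath_append.2 ⟨t, hxt, hty⟩⟩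

theorem mem_accepts_update_accept {M : εNFA α σ} {q : σ} {x : List α} :
    x ∈ ({ M with accept := {q} } : εNFA α σ).accepts ↔ q ∈ M.eval x := by
  simp [mem_accepts, eval, evalFrom_eq_of_step_eq (M := { M with accept := {q} }) (M' := M) rfl]

theorem mem_accepts_update_start {M : εNFA α σ} {q : σ} {y : List α} :
    y ∈ ({ M with start := {q} } : εNFA α σ).accepts ↔ ∃ f ∈ M.accept, f ∈ M.evalFrom {q} y := by
  simp [mem_accepts, eval, evalFrom_eq_of_step_eq (M := { M with start := {q} }) (M' := M) rfl]

theorem append_mem_accepts_iff {M : εNFA α σ} {x y : List α} :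
    x ++ y ∈ M.accepts ↔ ∃ q, x ∈ ({ M with accept := {q} } : εNFA α σ).accepts ∧
      y ∈ ({ M with start := {q} } : εNFA α σ).accepts := by
  simp_rw [mem_accepts_update_accept, mem_accepts_update_start, mem_accepts, eval]
  simp only [M.mem_evalFrom_iff_exists (S := M.start), mem_evalFrom_append_iff]
  aesop

end εNFA

theorem List.isPrefix_or_isPrefix_or_exists_branch {α : Type*} :
    ∀ c d : List α, c <+: d ∨ d <+: c ∨
      ∃ s c' d', c = s ++ c' ∧ d = s ++ d' ∧ c' ≠ [] ∧ d' ≠ [] ∧ c'.head? ≠ d'.head?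
  | [], d => Or.inl ⟨d, rfl⟩
  | x :: c, [] => Or.inr (Or.inl ⟨x :: c, rfl⟩)
  | x :: c, y :: d => by
    by_cases hxy : x = y
    · subst hxy
      rcases isPrefix_or_isPrefix_or_exists_branch c d with ⟨t, rfl⟩ | ⟨t, rfl⟩ |
        ⟨s, c', d', rfl, rfl, hc', hd', hhead⟩
      · exact Or.inl ⟨t, rfl⟩
      · exact Or.inr (Or.inl ⟨t, rfl⟩)
      · exact Or.inr (Or.inr ⟨x :: s, c', d', rfl, rfl, hc', hd', hhead⟩)
    · exact Or.inr (Or.inr ⟨[], x :: c, y :: d, rfl, rfl, by simp, by simp, by simp [hxy]⟩)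

theorem not_isPrefix_append_of_forall_drop {α : Type*} {w : List α} {ℓ : ℕ}
    (hw : ∀ p q : ℕ, p < q → ℓ + 1 ≤ (w.drop q).length → ¬ (w.drop q <+: w.drop p))
    {x y z : List α} (hxyz : w = x ++ y ++ z) (hy : y ≠ []) (hz : ℓ + 1 ≤ z.length) :
    ¬ z <+: y ++ z := by
  have hq : w.drop (x ++ y).length = z := by rw [hxyz, List.drop_left]
  have hp : w.drop x.length = y ++ z := by rw [hxyz, List.append_assoc, List.drop_left]
  have hlt : x.length < (x ++ y).length := by
    simpa [List.length_pos_iff] using hy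
  simpa only [hq, hp] using hw _ _ hlt (hq ▸ hz)

theorem stmt0_general {α σC σD : Type*} (w : List α) (ℓ : ℕ)
    (A B : Set (List α)) (hB : ([] : List α) ∉ B)
    (NC : εNFA α σC) (ND : εNFA α σD)
    (hnopre : ∀ p q : ℕ, p < q → ℓ + 1 ≤ (w.drop q).length →
      ¬ (w.drop q <+: w.drop p))
    (hD : ∀ d ∈ ND.accepts, ℓ + 1 ≤ d.length) :
    (∃ a ∈ A, ∃ b ∈ B, ∃ c ∈ NC.accepts, ∃ d ∈ ND.accepts,
        w = a ++ b ++ c ++ b ++ d) ↔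
      ((∃ fC ∈ NC.accept, ∃ qD : σD, ∃ a u z : List α,
          w = a ++ u ++ u ++ z ∧ a ∈ A ∧
          u ∈ setMul B
            {x | x ∈ ({ NC with accept := {fC} } : εNFA α σC).accepts ∧
                 x ∈ ({ ND with accept := {qD} } : εNFA α σD).accepts} ∧
          z ∈ ({ ND with start := {qD} } : εNFA α σD).accepts) ∨
        (∃ (qC : σC) (qD : σD), ∃ a u c' d' : List α,
          w = a ++ u ++ c' ++ u ++ d' ∧ a ∈ A ∧
          u ∈ setMul B
            {x | x ∈ ({ NC with accept := {qC} } : εNFA α σC).accepts ∧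
                 x ∈ ({ ND with accept := {qD} } : εNFA α σD).accepts} ∧
          c' ∈ ({ NC with start := {qC} } : εNFA α σC).accepts ∧
          d' ∈ ({ ND with start := {qD} } : εNFA α σD).accepts ∧
          c' ≠ [] ∧ d' ≠ [] ∧ c'.head? ≠ d'.head?)) := by
  constructor
  · rintro ⟨a, ha, b, hb, c, hc, d, hd, rfl⟩
    rcases List.isPrefix_or_isPrefix_or_exists_branch c d with ⟨z, rfl⟩ | ⟨t, rfl⟩ |
      ⟨s, c', d', rfl, rfl, hc'_ne, hd'_ne, hhead⟩
    · obtain ⟨qD, hcD, hz⟩ := εNFA.append_mem_accepts_iff.1 hd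
      obtain ⟨fC, hfC, hcC⟩ := εNFA.mem_accepts.1 hc
      exact Or.inl ⟨fC, hfC, qD, a, b ++ c, z, by simp, ha,
        ⟨b, hb, c, ⟨εNFA.mem_accepts_update_accept.2 hcC, hcD⟩, rfl⟩, hz⟩
    · -- the second occurrence of `d` would be a prefix of the suffix starting at `d ++ t`
      refine absurd ⟨t ++ b ++ d, by simp⟩ (not_isPrefix_append_of_forall_drop hnopre
        (x := a ++ b) (y := d ++ t ++ b) (by simp) (by simp [ne_of_mem_of_not_mem hb hB]) (hD d hd))
    · obtain ⟨qC, hsC, hc'⟩ := εNFA.append_mem_accepts_iff.1 hc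
      obtain ⟨qD, hsD, hd'⟩ := εNFA.append_mem_accepts_iff.1 hd
      exact Or.inr ⟨qC, qD, a, b ++ s, c', d', by simp, ha,
        ⟨b, hb, s, ⟨hsC, hsD⟩, rfl⟩, hc', hd', hc'_ne, hd'_ne, hhead⟩
  · rintro (⟨fC, hfC, qD, a, u, z, rfl, ha, ⟨b, hb, x, ⟨hxC, hxD⟩, rfl⟩, hz⟩ |
        ⟨qC, qD, a, u, c', d', rfl, ha, ⟨b, hb, x, ⟨hxC, hxD⟩, rfl⟩, hc', hd', -⟩)
    · exact ⟨a, ha, b, hb, x, ⟨fC, hfC, εNFA.mem_accepts_update_accept.1 hxC⟩, x ++ z,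
        εNFA.append_mem_accepts_iff.2 ⟨qD, hxD, hz⟩, by simp⟩
    · exact ⟨a, ha, b, hb, x ++ c', εNFA.append_mem_accepts_iff.2 ⟨qC, hxC, hc'⟩, x ++ d',
        εNFA.append_mem_accepts_iff.2 ⟨qD, hxD, hd'⟩, by simp⟩

theorem stmt0 {α σC σD : Type*} (w : List α) (ℓ : ℕ) (hℓ : 1 ≤ ℓ)
    (A B : Set (List α)) (hB : ([] : List α) ∉ B)
    (NC : εNFA α σC) (ND : εNFA α σD)
    (hnopre : ∀ p q : ℕ, p < q → ℓ + 1 ≤ (w.drop q).length →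
      ¬ (w.drop q <+: w.drop p))
    (hD : ∀ d ∈ ND.accepts, ℓ + 1 ≤ d.length) :
    (∃ a ∈ A, ∃ b ∈ B, ∃ c ∈ NC.accepts, ∃ d ∈ ND.accepts,
        w = a ++ b ++ c ++ b ++ d) ↔
      ((∃ fC ∈ NC.accept, ∃ qD : σD, ∃ a u z : List α,
          w = a ++ u ++ u ++ z ∧ a ∈ A ∧
          u ∈ setMul B
            {x | x ∈ ({ NC with accept := {fC} } : εNFA α σC).accepts ∧
                 x ∈ ({ ND with accept := {qD} } : εNFA α σD).accepts} ∧
          z ∈ ({ ND with start := {qD} } : εNFA α σD).accepts) ∨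
        (∃ (qC : σC) (qD : σD), ∃ a u c' d' : List α,
          w = a ++ u ++ c' ++ u ++ d' ∧ a ∈ A ∧
          u ∈ setMul B
            {x | x ∈ ({ NC with accept := {qC} } : εNFA α σC).accepts ∧
                 x ∈ ({ ND with accept := {qD} } : εNFA α σD).accepts} ∧
          c' ∈ ({ NC with start := {qC} } : εNFA α σC).accepts ∧
          d' ∈ ({ ND with start := {qD} } : εNFA α σD).accepts ∧
          c' ≠ [] ∧ d' ≠ [] ∧ c'.head? ≠ d'.head?)) :=
  stmt0_general w ℓ A B hB NC ND hnopre hD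
end

section
/- Let Σ be an alphabet, let w be a word over Σ, and let X, Y, Z ⊆ Σ* be languages with [] ∉ Y. Then the following are equivalent: (1) there exist x ∈ X, y ∈ Y, z ∈ Z with w = x ++ y ++ y ++ z; (2) there exist a maximal local power (p, θ, e) of w and natural numbers i, j, k with j ≥ 1 and i + 2j + k = e such that (take p w) ++ θ^i ∈ X, θ^j ∈ Y, and θ^k ++ (drop (p + e·|θ|) w) ∈ Z, where take p w denotes the prefix of w of length p and drop (p + e·|θ|) w denotes the suffix of w obtained by removing its first p + e·|θ| letters. -/
/-- `wpow u k` is the `k`-fold concatenation of the word `u` with itself. -/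
def wpow {α : Type*} (u : List α) : ℕ → List α
  | 0 => []
  | k + 1 => u ++ wpow u k

/-- `u` occurs in `w` at position `j` (0-indexed). -/
def Occurs {α : Type*} (u w : List α) (j : ℕ) : Prop :=
  u <+: w.drop j

/-- A nonempty word is primitive if it is not a proper power. -/
def Primitive {α : Type*} (p : List α) : Prop :=
  p ≠ [] ∧ ∀ (u : List α) (k : ℕ), 2 ≤ k → p ≠ wpow u k

/-- `(p, θ, e)` is a maximal local power of `w`. -/
def MaxLocalPower {α : Type*} (w : List α) (p : ℕ) (θ : List α) (e : ℕ) : Prop :=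
  Primitive θ ∧ 2 ≤ e ∧ Occurs (wpow θ e) w p ∧
    ¬ θ <:+ w.take p ∧ ¬ Occurs θ w (p + e * θ.length)

/-!
Write `y = θ^m` with `θ` primitive, and extend the occurrence of `θ^(2m)` in `x ++ y ++ y ++ z`
as far as possible: `x = s ++ θ^a` with `θ` not a suffix of `s`, and `z = θ^b ++ t` with `θ`
not a prefix of `t`. Then `(|s|, θ, a + 2m + b)` is a maximal local power of `w` and
`(i, j, k) = (a, m, b)`. Conversely, a factorisation of the exponent `e = i + 2j + k` cuts the
occurrence of `θ^e` into `θ^i ++ θ^j ++ θ^j ++ θ^k`.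
-/

section Words

variable {α : Type*}

section wpow

@[simp]
lemma wpow_zero (u : List α) : wpow u 0 = [] := rfl

lemma wpow_succ (u : List α) (k : ℕ) : wpow u (k + 1) = u ++ wpow u k := rfl

@[simp]
lemma wpow_one (u : List α) : wpow u 1 = u := List.append_nil u

lemma wpow_add (u : List α) (a b : ℕ) : wpow u (a + b) = wpow u a ++ wpow u b := by
  induction a with
  | zero => simp
  | succ a ih => rw [Nat.succ_add, wpow_succ, wpow_succ, ih, List.append_assoc]

lemma wpow_succ' (u : List α) (k : ℕ) : wpow u (k + 1) = wpow u k ++ u := by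
  rw [wpow_add, wpow_one]

lemma wpow_mul (u : List α) (m k : ℕ) : wpow u (m * k) = wpow (wpow u m) k := by
  induction k with
  | zero => rfl
  | succ k ih => rw [Nat.mul_succ, Nat.add_comm, wpow_add, ih, wpow_succ]

@[simp]
lemma length_wpow (u : List α) (k : ℕ) : (wpow u k).length = k * u.length := by
  induction k with
  | zero => simp
  | succ k ih => rw [wpow_succ, List.length_append, ih, Nat.succ_mul, Nat.add_comm]

end wpow

lemma exists_primitive_wpow_eq {y : List α} (hy : y ≠ []) :
    ∃ θ m, Primitive θ ∧ 1 ≤ m ∧ y = wpow θ m := by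
  induction h : y.length using Nat.strong_induction_on generalizing y with
  | _ n ih =>
  by_cases hprim : Primitive y
  · exact ⟨y, 1, hprim, le_rfl, (wpow_one y).symm⟩
  obtain ⟨u, k, hk, rfl⟩ : ∃ u k, 2 ≤ k ∧ y = wpow u k := by
    simpa [Primitive, hy] using hprim
  have hu : u ≠ [] := by rintro rfl; exact hy (List.length_eq_zero_iff.mp (by simp))
  have hlen : u.length < n := by
    have := List.length_pos_iff.mpr hu
    rw [← h, length_wpow]; nlinarith
  obtain ⟨θ, m, hθ, hm, rfl⟩ := ih _ hlen hu rfl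
  exact ⟨θ, m * k, hθ, Nat.one_le_iff_ne_zero.mpr (by positivity), (wpow_mul θ m k).symm⟩

lemma exists_eq_append_wpow_not_suffix {θ : List α} (hθ : θ ≠ []) (x : List α) :
    ∃ s a, x = s ++ wpow θ a ∧ ¬ θ <:+ s := by
  induction h : x.length using Nat.strong_induction_on generalizing x with
  | _ n ih =>
  by_cases hsuf : θ <:+ x
  · obtain ⟨x', rfl⟩ := hsuf
    have hlen : x'.length < n := by
      have := List.length_pos_iff.mpr hθ
      rw [← h, List.length_append]; omega
    obtain ⟨s, a, rfl, hs⟩ := ih _ hlen x' rfl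
    exact ⟨s, a + 1, by rw [wpow_succ', List.append_assoc], hs⟩
  · exact ⟨x, 0, (List.append_nil x).symm, hsuf⟩

lemma exists_eq_wpow_append_not_prefix {θ : List α} (hθ : θ ≠ []) (z : List α) :
    ∃ b t, z = wpow θ b ++ t ∧ ¬ θ <+: t := by
  induction h : z.length using Nat.strong_induction_on generalizing z with
  | _ n ih =>
  by_cases hpre : θ <+: z
  · obtain ⟨z', rfl⟩ := hpre
    have hlen : z'.length < n := by
      have := List.length_pos_iff.mpr hθ
      rw [← h, List.length_append]; omega
    obtain ⟨b, t, rfl, ht⟩ := ih _ hlen z' rfl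
    exact ⟨b + 1, t, by rw [wpow_succ, List.append_assoc], ht⟩
  · exact ⟨0, z, rfl, hpre⟩

lemma Occurs.eq_take_append_append_drop {u w : List α} {j : ℕ} (h : Occurs u w j) :
    w = w.take j ++ u ++ w.drop (j + u.length) := by
  obtain ⟨r, hr⟩ := h
  have hdrop : w.drop (j + u.length) = r := by
    rw [← List.drop_drop, ← hr, List.drop_left]
  rw [hdrop, List.append_assoc, hr, List.take_append_drop]

section factor

variable (s u t : List α)

lemma take_length_append_append : (s ++ u ++ t).take s.length = s := by
  rw [List.append_assoc, List.take_left]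

lemma drop_length_add_length_append_append :
    (s ++ u ++ t).drop (s.length + u.length) = t := by
  rw [← List.length_append, List.drop_left]

lemma occurs_length_append_append : Occurs u (s ++ u ++ t) s.length :=
  ⟨t, by rw [List.append_assoc, List.drop_left]⟩

end factor

lemma maxLocalPower_append_wpow_append {s θ t : List α} {e : ℕ} (hθ : Primitive θ)
    (he : 2 ≤ e) (hs : ¬ θ <:+ s) (ht : ¬ θ <+: t) :
    MaxLocalPower (s ++ wpow θ e ++ t) s.length θ e := by
  have hdrop := drop_length_add_length_append_append s (wpow θ e) t
  rw [length_wpow] at hdrop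
  refine ⟨hθ, he, occurs_length_append_append _ _ _, ?_, ?_⟩
  · rwa [take_length_append_append]
  · rwa [Occurs, hdrop]

end Words

theorem stmt1 {α : Type*} (w : List α) (X Y Z : Set (List α))
    (hY : ([] : List α) ∉ Y) :
    (∃ x ∈ X, ∃ y ∈ Y, ∃ z ∈ Z, w = x ++ y ++ y ++ z) ↔
      (∃ (p : ℕ) (θ : List α) (e : ℕ), MaxLocalPower w p θ e ∧
        ∃ i j k : ℕ, 1 ≤ j ∧ i + 2 * j + k = e ∧
          w.take p ++ wpow θ i ∈ X ∧ wpow θ j ∈ Y ∧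
          wpow θ k ++ w.drop (p + e * θ.length) ∈ Z) := by
  constructor
  · rintro ⟨x, hx, y, hy, z, hz, rfl⟩
    obtain ⟨θ, m, hθ, hm, rfl⟩ := exists_primitive_wpow_eq (ne_of_mem_of_not_mem hy hY)
    obtain ⟨s, a, rfl, hs⟩ := exists_eq_append_wpow_not_suffix hθ.1 x
    obtain ⟨b, t, rfl, ht⟩ := exists_eq_wpow_append_not_prefix hθ.1 z
    have hw : s ++ wpow θ a ++ wpow θ m ++ wpow θ m ++ (wpow θ b ++ t) =
        s ++ wpow θ (a + 2 * m + b) ++ t := by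
      simp only [wpow_add, two_mul, List.append_assoc]
    have hdrop := drop_length_add_length_append_append s (wpow θ (a + 2 * m + b)) t
    rw [length_wpow] at hdrop
    rw [hw]
    refine ⟨s.length, θ, a + 2 * m + b, maxLocalPower_append_wpow_append hθ (by omega) hs ht,
      a, m, b, hm, rfl, ?_, hy, ?_⟩
    · rwa [take_length_append_append]
    · rwa [hdrop]
  · rintro ⟨p, θ, e, hmax, i, j, k, -, rfl, hx, hy, hz⟩
    refine ⟨_, hx, _, hy, _, hz, ?_⟩
    have hw := hmax.2.2.1.eq_take_append_append_drop
    rw [length_wpow] at hw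
    exact hw.trans (by simp only [wpow_add, two_mul, List.append_assoc])
end

section
/- Let w be a word over an alphabet Σ, let m ≥ 1, let u be a word of length m, and let σ be a letter of Σ. Let S = {j ∈ ℕ : u ++ [σ] occurs in w at position j}, and let a ≤ b be natural numbers with b - a < m. Set T = S ∩ [a, b] (the set of elements of S lying between a and b inclusive) and suppose T has at least 3 elements. Then there exists an integer d ≥ 1 such that d divides (max T - min T), T = { min T + k·d : 0 ≤ k ≤ (max T - min T)/d } (i.e., T is an arithmetic progression with common difference d), and the factor of w consisting of positions min T through max T + m - 1 has period d. -/
/-- `v` has period `d`: letters at distance `d` agree whenever both indices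
are smaller than the length of `v`. -/
def HasPeriod {α : Type*} (v : List α) (d : ℕ) : Prop :=
  ∀ t : ℕ, t < v.length → t + d < v.length → v[t]? = v[t + d]?

section Words

variable {α : Type*}

theorem hasPeriod_iff_list_hasPeriod {v : List α} {d : ℕ} : HasPeriod v d ↔ v.HasPeriod d := by
  rw [List.hasPeriod_iff_getElem?]
  exact ⟨fun h t ht => h t (by omega) (by omega), fun h t _ htd => h t (by omega)⟩

namespace List

theorem HasPeriod.mul {w : List α} {p : ℕ} (h : w.HasPeriod p) (k : ℕ) : w.HasPeriod (k * p) := by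
  rw [hasPeriod_iff_forall_getElem?_mod] at h ⊢
  intro i hi
  rw [h i hi, h (i % (k * p)) ((Nat.mod_le _ _).trans_lt hi), Nat.mod_mul_left_mod]

theorem exists_pos_hasPeriod (w : List α) : ∃ p, 0 < p ∧ w.HasPeriod p :=
  ⟨w.length + 1, Nat.succ_pos _, hasPeriod_of_length_le w _ (Nat.le_succ _)⟩

open Classical in
noncomputable def minPeriod (w : List α) : ℕ :=
  Nat.find w.exists_pos_hasPeriod

theorem minPeriod_pos (w : List α) : 0 < w.minPeriod := by
  classical
  exact (Nat.find_spec w.exists_pos_hasPeriod).1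

theorem hasPeriod_minPeriod (w : List α) : w.HasPeriod w.minPeriod := by
  classical
  exact (Nat.find_spec w.exists_pos_hasPeriod).2

theorem minPeriod_le {w : List α} {p : ℕ} (hp : 0 < p) (h : w.HasPeriod p) :
    w.minPeriod ≤ p := by
  classical
  exact Nat.find_min' w.exists_pos_hasPeriod ⟨hp, h⟩

theorem hasPeriod_iff_minPeriod_dvd {w : List α} {q : ℕ} (hq : w.minPeriod + q ≤ w.length) :
    w.HasPeriod q ↔ w.minPeriod ∣ q := by
  refine ⟨fun h => ?_, fun ⟨k, hk⟩ => hk ▸ mul_comm k _ ▸ w.hasPeriod_minPeriod.mul k⟩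
  obtain rfl | hq0 := Nat.eq_zero_or_pos q
  · exact dvd_zero _
  set d := w.minPeriod
  have hd0 : 0 < d := w.minPeriod_pos
  have hgcd : w.HasPeriod (d.gcd q) := w.hasPeriod_minPeriod.gcd h (by omega)
  have hle : d ≤ d.gcd q := minPeriod_le (Nat.gcd_pos_of_pos_left q hd0) hgcd
  rw [← Nat.gcd_eq_left_iff_dvd]
  exact le_antisymm (Nat.gcd_le_left q hd0) hle

end List

theorem occurs_iff_getElem? {x w : List α} {j : ℕ} :
    Occurs x w j ↔ ∀ t < x.length, w[j + t]? = x[t]? := by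
  simp only [Occurs, List.prefix_iff_getElem?, List.getElem?_drop]
  exact forall₂_congr fun t ht => by rw [List.getElem?_eq_getElem ht]

theorem occurs_add_iff_hasPeriod {x w : List α} {p D r : ℕ} (hp : Occurs x w p)
    (hpD : Occurs x w (p + D)) (hD : D ≤ x.length) (hr : r ≤ D) :
    Occurs x w (p + r) ↔ ((w.drop p).take (D + x.length)).HasPeriod r := by
  set v := (w.drop p).take (D + x.length)
  have hv : ∀ s < D + x.length, v[s]? = w[p + s]? := fun s hs => by
    rw [List.getElem?_take, if_pos hs, List.getElem?_drop]
  have hvlen : v.length ≤ D + x.length := List.length_take_le _ _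
  have hwlen : x.length ≤ w.length - (p + D) := by simpa using hpD.length_le
  rw [occurs_iff_getElem?] at hp hpD
  rw [occurs_iff_getElem?, List.hasPeriod_iff_getElem?]
  constructor
  · intro hpr i hi
    rw [hv i (by omega), hv (i + r) (by omega)]
    by_cases hix : i < x.length
    · rw [hp i hix, ← hpr i hix, add_right_comm, add_assoc]
    · -- both letters lie in the occurrence at `p + D`, and the overlapping occurrences at `p`
      -- and `p + r` show that `x` has period `r`
      have hxr : x[i - D]? = x[i - D + r]? := by
        rw [← hpr (i - D) (by omega), ← hp (i - D + r) (by omega), add_right_comm, add_assoc]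
      rw [show p + i = p + D + (i - D) by omega, show p + (i + r) = p + D + (i - D + r) by omega,
        hpD _ (by omega), hpD _ (by omega), hxr]
  · intro hper t ht
    have hvlen' : v.length = D + x.length := by
      simp only [v, List.length_take, List.length_drop]
      omega
    rw [add_assoc, add_comm r t, ← hv (t + r) (by omega), ← hper t (by omega), hv t (by omega),
      hp t ht]

theorem le_and_le_and_dvd_sub_iff {p q d j : ℕ} (hpq : p ≤ q) :
    (p ≤ j ∧ j ≤ q ∧ d ∣ j - p) ↔ ∃ k ≤ (q - p) / d, j = p + k * d := by
  constructor
  · rintro ⟨hpj, hjq, hd⟩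
    refine ⟨(j - p) / d, Nat.div_le_div_right (by omega), ?_⟩
    rw [Nat.div_mul_cancel hd]
    omega
  · rintro ⟨k, hk, rfl⟩
    have : k * d ≤ q - p := (Nat.mul_le_mul_right d hk).trans (Nat.div_mul_le_self _ _)
    exact ⟨by omega, by omega, by simp⟩

end Words

theorem stmt3_general {α : Type*} (w u : List α) (m : ℕ)
    (hu : u.length = m) (σ : α) (a b : ℕ) (hba : b - a < m)
    (T : Finset ℕ)
    (hT : ∀ j : ℕ, j ∈ T ↔ (a ≤ j ∧ j ≤ b ∧ Occurs (u ++ [σ]) w j))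
    (hcard : 3 ≤ T.card) :
    ∃ d : ℕ, 1 ≤ d ∧ ∃ hne : T.Nonempty,
      d ∣ (T.max' hne - T.min' hne) ∧
      (∀ j : ℕ, j ∈ T ↔ ∃ k : ℕ, k ≤ (T.max' hne - T.min' hne) / d ∧
        j = T.min' hne + k * d) ∧
      HasPeriod ((w.drop (T.min' hne)).take (T.max' hne + m - T.min' hne)) d := by
  have hne : T.Nonempty := Finset.card_pos.mp (by omega)
  set p := T.min' hne
  set q := T.max' hne
  have hpq : p < q := T.min'_lt_max'_of_card (by omega)
  obtain ⟨hap, -, hp⟩ := (hT p).mp (T.min'_mem hne)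
  obtain ⟨-, hqb, hq⟩ := (hT q).mp (T.max'_mem hne)
  have hmemT (j : ℕ) : j ∈ T ↔ p ≤ j ∧ j ≤ q ∧ Occurs (u ++ [σ]) w j :=
    ⟨fun hj => ⟨T.min'_le j hj, T.le_max' j hj, ((hT j).mp hj).2.2⟩,
      fun ⟨hpj, hjq, hj⟩ => (hT j).mpr ⟨by omega, by omega, hj⟩⟩
  have hxlen : (u ++ [σ]).length = m + 1 := by simp [hu]
  set v := (w.drop p).take (q - p + (u ++ [σ]).length)
  set d := v.minPeriod
  have hqD : Occurs (u ++ [σ]) w (p + (q - p)) := by rwa [Nat.add_sub_cancel' hpq.le]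
  have hocc (r : ℕ) (hr : r ≤ q - p) : Occurs (u ++ [σ]) w (p + r) ↔ v.HasPeriod r :=
    occurs_add_iff_hasPeriod hp hqD (by omega) hr
  have hvlen : v.length = q - p + (m + 1) := by
    have := hq.length_le
    simp only [List.length_drop] at this
    simp only [v, List.length_take, List.length_drop]
    omega
  have hdD : d ≤ q - p := List.minPeriod_le (by omega) ((hocc _ le_rfl).mp hqD)
  have hdvd (r : ℕ) (hr : r ≤ q - p) : Occurs (u ++ [σ]) w (p + r) ↔ d ∣ r :=
    (hocc r hr).trans (List.hasPeriod_iff_minPeriod_dvd (by omega))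
  refine ⟨d, v.minPeriod_pos, hne, (hdvd _ le_rfl).mp hqD, fun j => ?_, ?_⟩
  · rw [hmemT, ← le_and_le_and_dvd_sub_iff hpq.le]
    refine and_congr_right fun hpj => and_congr_right fun hjq => ?_
    rw [← hdvd (j - p) (by omega), Nat.add_sub_cancel' hpj]
  · have hprefix : (w.drop p).take (q + m - p) <+: v := by
      rw [show q + m - p = min (q + m - p) (q - p + (u ++ [σ]).length) by omega, ← List.take_take]
      exact List.take_prefix _ _
    exact hasPeriod_iff_list_hasPeriod.mpr (v.hasPeriod_minPeriod.infix hprefix.isInfix)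

theorem stmt3 {α : Type*} (w u : List α) (m : ℕ) (hm : 1 ≤ m)
    (hu : u.length = m) (σ : α) (a b : ℕ) (hab : a ≤ b) (hba : b - a < m)
    (T : Finset ℕ)
    (hT : ∀ j : ℕ, j ∈ T ↔ (a ≤ j ∧ j ≤ b ∧ Occurs (u ++ [σ]) w j))
    (hcard : 3 ≤ T.card) :
    ∃ d : ℕ, 1 ≤ d ∧ ∃ hne : T.Nonempty,
      d ∣ (T.max' hne - T.min' hne) ∧
      (∀ j : ℕ, j ∈ T ↔ ∃ k : ℕ, k ≤ (T.max' hne - T.min' hne) / d ∧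
        j = T.min' hne + k * d) ∧
      HasPeriod ((w.drop (T.min' hne)).take (T.max' hne + m - T.min' hne)) d :=
  stmt3_general w u m hu σ a b hba T hT hcard
end

section
/- If P, Q ⊆ ℕ are ultimately periodic sets, then the Minkowski sum P + Q := {p + q : p ∈ P, q ∈ Q} is ultimately periodic. -/
/-- A set `S ⊆ ℕ` is ultimately periodic if there are `μ` and `λ ≥ 1` such that
for every `n ≥ μ`, `n ∈ S ↔ n + λ ∈ S`. -/
def UltimatelyPeriodic (S : Set ℕ) : Prop :=
  ∃ μ lam : ℕ, 1 ≤ lam ∧ ∀ n : ℕ, μ ≤ n → (n ∈ S ↔ n + lam ∈ S)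

lemma up_iter (S : Set ℕ) (μ lam : ℕ)
    (h : ∀ n : ℕ, μ ≤ n → (n ∈ S ↔ n + lam ∈ S)) :
    ∀ k n : ℕ, μ ≤ n → (n ∈ S ↔ n + k * lam ∈ S) := by
  intro k
  induction k with
  | zero => simp
  | succ k ih =>
    intro n hn
    rw [ih n hn, h (n + k * lam) (le_trans hn (Nat.le_add_right _ _))]
    congr! 1
    ring

theorem stmt6 (P Q : Set ℕ) (hP : UltimatelyPeriodic P) (hQ : UltimatelyPeriodic Q) :
    UltimatelyPeriodic {n : ℕ | ∃ p ∈ P, ∃ q ∈ Q, n = p + q} := by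
  obtain ⟨μ₁, l₁, hl₁, h₁⟩ := hP
  obtain ⟨μ₂, l₂, hl₂, h₂⟩ := hQ
  set L := l₁ * l₂ with hLdef
  have hL : 1 ≤ L := Nat.mul_pos hl₁ hl₂
  have hPiter : ∀ n, μ₁ ≤ n → (n ∈ P ↔ n + L ∈ P) := by
    intro n hn
    have := up_iter P μ₁ l₁ h₁ l₂ n hn
    rwa [mul_comm l₂ l₁] at this
  have hQiter : ∀ n, μ₂ ≤ n → (n ∈ Q ↔ n + L ∈ Q) :=
    fun n hn => up_iter Q μ₂ l₂ h₂ l₁ n hn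
  clear_value L
  refine ⟨μ₁ + μ₂ + L, L, hL, ?_⟩
  intro n hn
  constructor
  · rintro ⟨p, hp, q, hq, rfl⟩
    by_cases hpc : μ₁ ≤ p
    · exact ⟨p + L, (hPiter p hpc).mp hp, q, hq, by omega⟩
    · have hqc : μ₂ ≤ q := by omega
      exact ⟨p, hp, q + L, (hQiter q hqc).mp hq, by omega⟩
  · rintro ⟨p, hp, q, hq, heq⟩
    by_cases hpc : μ₁ + L ≤ p
    · refine ⟨p - L, ?_, q, hq, by omega⟩
      have := hPiter (p - L) (by omega)
      rw [Nat.sub_add_cancel (by omega)] at this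
      exact this.mpr hp
    · have hqc : μ₂ + L ≤ q := by omega
      refine ⟨p, hp, q - L, ?_, by omega⟩
      have := hQiter (q - L) (by omega)
      rw [Nat.sub_add_cancel (by omega)] at this
      exact this.mpr hq
end

section
/- Let E be a regular expression over an alphabet Σ. Then there exist a monoid M with finitely many elements, a monoid homomorphism α from the free monoid on Σ (words under concatenation) to M, and a subset S ⊆ M such that for every word w over Σ, w ∈ L(E) if and only if α(w) ∈ S. -/
/-!
By the Myhill–Nerode theorem it suffices that `L(E)` has only finitely many left quotients
`x⁻¹L = {y | x ++ y ∈ L}`. Finite languages clearly do, and every left quotient of `L₁ * L₂`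
(resp. `L∗`) is a fixed expression in one left quotient of `L₁` (resp. a truth value) and a set of
left quotients of `L₂` (resp. `L`). The transition monoid of the resulting finite automaton
recognizes `L(E)`.
-/

open Computability MulOpposite

namespace Language

variable {α : Type*}

theorem leftQuotient_mul (l m : Language α) (x : List α) :
    (l * m).leftQuotient x =
      l.leftQuotient x * m + ⨆ v ∈ {v | ∃ u ∈ l, u ++ v = x}, m.leftQuotient v := by
  ext y
  simp only [mem_leftQuotient, mem_add, mem_mul, mem_iSup, Set.mem_ofPred_eq]
  constructor
  · rintro ⟨u, hu, w, hw, h⟩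
    rcases List.append_eq_append_iff.1 h with ⟨v, rfl, rfl⟩ | ⟨z, rfl, rfl⟩
    · exact .inr ⟨v, ⟨u, hu, rfl⟩, hw⟩
    · exact .inl ⟨z, hu, w, hw, rfl⟩
  · rintro (⟨z, hz, w, hw, rfl⟩ | ⟨v, ⟨u, hu, rfl⟩, hv⟩)
    · exact ⟨_, hz, w, hw, List.append_assoc _ _ _⟩
    · exact ⟨u, hu, _, hv, (List.append_assoc _ _ _).symm⟩

theorem append_mem_kstar {l : Language α} {x y : List α} (hx : x ∈ l∗) (hy : y ∈ l∗) :
    x ++ y ∈ l∗ :=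
  kstar_mul_kstar l ▸ mem_mul.2 ⟨x, hx, y, hy, rfl⟩

theorem leftQuotient_kstar (l : Language α) (x : List α) :
    l∗.leftQuotient x =
      (⨆ _ : x ∈ l∗, l∗) + (⨆ v ∈ {v | ∃ u ∈ l∗, u ++ v = x}, l.leftQuotient v) * l∗ := by
  ext y
  simp only [mem_leftQuotient, mem_add, mem_mul, mem_iSup, Set.mem_ofPred_eq]
  constructor
  · rw [mem_kstar]
    rintro ⟨S, hS, hl⟩
    -- the cut between `x` and `y` lies either inside the first factor of `S` or after it
    induction S generalizing x with
    | nil =>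
      obtain ⟨rfl, rfl⟩ := List.append_eq_nil_iff.1 hS
      exact .inl ⟨nil_mem_kstar l, nil_mem_kstar l⟩
    | cons w S ih =>
      rw [List.flatten_cons] at hS
      have hSl : ∀ v ∈ S, v ∈ l := fun v hv => hl v (List.mem_cons_of_mem w hv)
      rcases List.append_eq_append_iff.1 hS with ⟨z, rfl, rfl⟩ | ⟨v, rfl, hv⟩
      · exact .inr ⟨z, ⟨x, ⟨[], nil_mem_kstar l, rfl⟩, hl _ List.mem_cons_self⟩,
          S.flatten, join_mem_kstar hSl, rfl⟩
      · have hw : w ∈ l∗ := le_kstar (a := l) (hl w List.mem_cons_self)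
        rcases ih v hv.symm hSl with ⟨hv, hy⟩ | ⟨z, ⟨v', ⟨u, hu, rfl⟩, hz⟩, t, ht, rfl⟩
        · exact .inl ⟨append_mem_kstar hw hv, hy⟩
        · exact .inr ⟨z, ⟨v', ⟨w ++ u, append_mem_kstar hw hu, List.append_assoc _ _ _⟩, hz⟩,
            t, ht, rfl⟩
  · rintro (⟨hx, hy⟩ | ⟨z, ⟨v, ⟨u, hu, rfl⟩, hz⟩, t, ht, rfl⟩)
    · exact append_mem_kstar hx hy
    · have := append_mem_kstar hu (append_mem_kstar (le_kstar (a := l) hz) ht)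
      simpa only [List.append_assoc] using this

theorem IsRegular.mul {l m : Language α} (hl : l.IsRegular) (hm : m.IsRegular) :
    (l * m).IsRegular := by
  rw [isRegular_iff_finite_range_leftQuotient] at *
  refine ((hl.prod hm.powerset).image fun p => p.1 * m + ⨆ q ∈ p.2, q).subset ?_
  rintro _ ⟨x, rfl⟩
  exact ⟨(l.leftQuotient x, m.leftQuotient '' {v | ∃ u ∈ l, u ++ v = x}),
    ⟨⟨x, rfl⟩, Set.image_subset_range _ _⟩, by dsimp only; rw [leftQuotient_mul, iSup_image]⟩

theorem IsRegular.kstar {l : Language α} (hl : l.IsRegular) : l∗.IsRegular := by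
  rw [isRegular_iff_finite_range_leftQuotient] at *
  refine ((Set.finite_univ.prod hl.powerset).image
    fun p : Prop × Set (Language α) => (⨆ _ : p.1, l∗) + (⨆ q ∈ p.2, q) * l∗).subset ?_
  rintro _ ⟨x, rfl⟩
  exact ⟨(x ∈ l∗, l.leftQuotient '' {v | ∃ u ∈ l∗, u ++ v = x}),
    ⟨trivial, Set.image_subset_range _ _⟩, by dsimp only; rw [leftQuotient_kstar, iSup_image]⟩

theorem IsRegular.of_finite {L : Language α} (hL : Set.Finite L) : L.IsRegular := by
  refine .of_finite_range_leftQuotient <|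
    ((hL.biUnion fun w _ => w.inits.finite_toSet).image L.leftQuotient |>.insert 0).subset ?_
  rintro _ ⟨x, rfl⟩
  by_cases hx : ∃ y, x ++ y ∈ L
  · obtain ⟨y, hy⟩ := hx
    exact .inr ⟨x, Set.mem_biUnion hy ((List.mem_inits _ _).2 ⟨y, rfl⟩), rfl⟩
  · exact .inl (Set.eq_empty_of_forall_notMem fun y hy => hx ⟨y, hy⟩)

end Language

theorem RegularExpression.isRegular_matches' {α : Type*} (E : RegularExpression α) :
    E.matches'.IsRegular := by
  induction E with
  | zero => exact .of_finite Set.finite_empty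
  | epsilon => exact .of_finite (Set.finite_singleton [])
  | char a => exact .of_finite (Set.finite_singleton [a])
  | plus P Q hP hQ => exact hP.add hQ
  | comp P Q hP hQ => exact hP.mul hQ
  | star P hP => exact hP.kstar

namespace DFA

variable {α σ : Type*}

def transitionHom (M : DFA α σ) : FreeMonoid α →* (Function.End σ)ᵐᵒᵖ :=
  FreeMonoid.lift fun a => op (M.step · a)

theorem unop_transitionHom_ofList (M : DFA α σ) (w : List α) (s : σ) :
    unop (M.transitionHom (FreeMonoid.ofList w)) s = M.evalFrom s w := by
  induction w generalizing s with
  | nil => rfl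
  | cons a w ih =>
    rw [FreeMonoid.ofList_cons, map_mul, unop_mul]
    exact ih (M.step s a)

end DFA

theorem stmt11 {α : Type} (E : RegularExpression α) :
    ∃ (M : MonCat) (_ : Finite M) (φ : FreeMonoid α →* M) (S : Set M),
      ∀ w : List α, w ∈ E.matches' ↔ φ (FreeMonoid.ofList w) ∈ S := by
  obtain ⟨σ, _, A, hA⟩ := Language.isRegular_iff.1 E.isRegular_matches'
  refine ⟨MonCat.of (Function.End σ)ᵐᵒᵖ, Finite.of_equiv (σ → σ) opEquiv, A.transitionHom,
    {f | unop f A.start ∈ A.accept}, fun w => ?_⟩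
  rw [← hA, DFA.mem_accepts, Set.mem_ofPred_eq, A.unop_transitionHom_ofList]
  rfl
end

section
/- Let N be an ε-NFA over an alphabet α with state type σ. Then there exists an ε-NFA N' over α with state type σ × Bool such that the language accepted by N' equals the language accepted by N with the empty word removed, i.e., accepts(N') = accepts(N) \ {[]}. -/
open Set

namespace Stmt13Aux

variable {α : Type*} {σ : Type*}

/-- The pruned automaton: second component records whether a real letter was read. -/
def prune (N : εNFA α σ) : εNFA α (σ × Bool) where
  step p o := match o with
    | none => (N.step p.1 none) ×ˢ {p.2}
    | some a => (N.step p.1 (some a)) ×ˢ {true}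
  start := N.start ×ˢ {false}
  accept := N.accept ×ˢ {true}

lemma eps_of (N : εNFA α σ) (A : Set σ) (b : Bool) {s : σ} (h : s ∈ N.εClosure A) :
    (s, b) ∈ (prune N).εClosure (A ×ˢ {b}) := by
  induction h with
  | base s hs => exact εNFA.εClosure.base _ ⟨hs, rfl⟩
  | step u t ht _ ih => exact εNFA.εClosure.step (u, b) (t, b) ⟨ht, rfl⟩ ih

lemma eps (N : εNFA α σ) (A : Set σ) (b : Bool) :
    (prune N).εClosure (A ×ˢ {b}) = N.εClosure A ×ˢ {b} := by
  ext p
  constructor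
  · intro h
    induction h with
    | base s hs => exact ⟨εNFA.εClosure.base _ hs.1, hs.2⟩
    | step s t ht _ ih =>
      have ht' : t.1 ∈ N.step s.1 none ∧ t.2 = s.2 := ht
      refine ⟨εNFA.εClosure.step s.1 t.1 ht'.1 ih.1, ?_⟩
      simp only [mem_singleton_iff] at *
      rw [ht'.2, ih.2]
  · rintro ⟨h1, h2⟩
    simp only [mem_singleton_iff] at h2
    subst h2
    have := eps_of N A p.2 h1
    rwa [Prod.mk.eta] at this

lemma stepSet_eq (N : εNFA α σ) (A : Set σ) (b : Bool) (a : α) :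
    (prune N).stepSet (A ×ˢ {b}) a = N.stepSet A a ×ˢ {true} := by
  ext p
  simp only [εNFA.mem_stepSet_iff, mem_prod, mem_singleton_iff]
  constructor
  · rintro ⟨t, ⟨ht, -⟩, hp⟩
    have : p ∈ (prune N).εClosure (N.step t.1 (some a) ×ˢ {true}) := hp
    rw [eps] at this
    exact ⟨⟨t.1, ht, this.1⟩, this.2⟩
  · rintro ⟨⟨t, ht, hp⟩, hb⟩
    refine ⟨(t, b), ⟨ht, rfl⟩, ?_⟩
    show p ∈ (prune N).εClosure (N.step t (some a) ×ˢ {true})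
    rw [eps]
    exact ⟨hp, hb⟩

lemma foldl_eq (N : εNFA α σ) (x : List α) (B : Set σ) :
    List.foldl (prune N).stepSet (B ×ˢ {true}) x = (List.foldl N.stepSet B x) ×ˢ {true} := by
  induction x generalizing B with
  | nil => rfl
  | cons a x ih => rw [List.foldl_cons, stepSet_eq, ih, List.foldl_cons]

lemma eval_cons (N : εNFA α σ) (a : α) (x : List α) :
    (prune N).eval (a :: x) = N.eval (a :: x) ×ˢ {true} := by
  show List.foldl _ ((prune N).εClosure (N.start ×ˢ {false})) _ = _
  rw [eps, List.foldl_cons, stepSet_eq, foldl_eq]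
  rfl

end Stmt13Aux

theorem stmt13 {α σ : Type*} (N : εNFA α σ) :
    ∃ N' : εNFA α (σ × Bool), N'.accepts = N.accepts \ {[]} := by
  refine ⟨Stmt13Aux.prune N, ?_⟩
  ext x
  cases x with
  | nil =>
    constructor
    · rintro ⟨s, hacc, hev⟩
      have : s ∈ N.εClosure N.start ×ˢ ({false} : Set Bool) := by
        rw [← Stmt13Aux.eps]; exact hev
      have h2 : s.2 = true := hacc.2
      have h3 : s.2 = false := this.2
      rw [h2] at h3
      exact absurd h3 (by simp)
    · rintro ⟨-, h⟩
      exact absurd rfl h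
  | cons a x =>
    constructor
    · rintro ⟨s, hacc, hev⟩
      rw [Stmt13Aux.eval_cons] at hev
      exact ⟨⟨s.1, hacc.1, hev.1⟩, List.cons_ne_nil a x⟩
    · rintro ⟨⟨s, hacc, hev⟩, -⟩
      refine ⟨(s, true), ⟨hacc, rfl⟩, ?_⟩
      rw [Stmt13Aux.eval_cons]
      exact ⟨hev, rfl⟩
end

section
/- Let Σ be an alphabet, let ℓ ≥ 1, and let bin : Σ → List Bool be a function such that every value bin σ has length ℓ. For a word w over Σ define san(w) := (the concatenation, over the letters σ of w in order, of bin σ ++ [false]) ++ (the list consisting of ℓ+1 copies of true). Then for all positions p and q with 0 ≤ p < q and with the suffix of san(w) starting at position q having length at least ℓ+1, the suffix of san(w) starting at position q is not a prefix of the suffix of san(w) starting at position p. -/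
/-!
In `san bin ℓ w` the last position `k * (ℓ + 1) + ℓ` of each letter block holds `false`, and the
final `ℓ + 1` positions hold `true`. A suffix starting at `q` that is a prefix of the suffix
starting at `p < q` makes the word `d`-periodic from `p` on, with `d = q - p`. Shifting the final
`true` block back by `d` gives a window of `ℓ + 1` positions starting between `p` and the
`true` block (because `q` does); that window contains a `false` separator, which the period
would force to be `true`.
-/

/-- The sanitized encoding: each letter `σ` is replaced by `bin σ ++ [false]`,
and `ℓ+1` copies of `true` are appended at the end. -/
def san {α : Type*} (bin : α → List Bool) (ℓ : ℕ) (w : List α) : List Bool :=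
  (w.map fun σ => bin σ ++ [false]).flatten ++ List.replicate (ℓ + 1) true

theorem List.getElem?_add_eq_of_drop_prefix {β : Type*} {l : List β} {p q j : ℕ}
    (h : l.drop q <+: l.drop p) (hj : q + j < l.length) : l[p + j]? = l[q + j]? := by
  obtain ⟨t, ht⟩ := h
  have hj' : j < (l.drop q).length := by rw [List.length_drop]; omega
  rw [← List.getElem?_drop, ← ht, List.getElem?_append_left hj', List.getElem?_drop]

theorem Nat.exists_lt_mul_add_mem_Icc {a m n : ℕ} (ha : a < (m + 1) * n) :
    ∃ k < n, k * (m + 1) + m ∈ Set.Icc a (a + m) := by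
  refine ⟨a / (m + 1), (Nat.div_lt_iff_lt_mul (by omega)).2 (by linarith), ?_, ?_⟩
  · have := Nat.lt_div_mul_add (a := a) (b := m + 1) (by omega)
    omega
  · have := Nat.div_mul_le_self a (m + 1)
    omega

section San

variable {α : Type*} (bin : α → List Bool) (ℓ : ℕ)

theorem san_cons (a : α) (w : List α) :
    san bin ℓ (a :: w) = (bin a ++ [false]) ++ san bin ℓ w := by
  simp [san]

variable {bin ℓ} (hbin : ∀ σ : α, (bin σ).length = ℓ)
include hbin

theorem length_flatten_map_bin_append (w : List α) :
    ((w.map fun σ => bin σ ++ [false]).flatten).length = (ℓ + 1) * w.length := by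
  simp [List.length_flatten, hbin, Function.comp_def, mul_comm]

theorem length_san (w : List α) : (san bin ℓ w).length = (ℓ + 1) * w.length + (ℓ + 1) := by
  simp [san, length_flatten_map_bin_append hbin]

theorem san_getElem?_separator {w : List α} {k : ℕ} (hk : k < w.length) :
    (san bin ℓ w)[k * (ℓ + 1) + ℓ]? = some false := by
  induction w generalizing k with
  | nil => simp at hk
  | cons a w ih =>
    have hblock : (bin a ++ [false]).length = ℓ + 1 := by simp [hbin]
    rw [san_cons]
    cases k with
    | zero =>
      rw [List.getElem?_append_left (by omega), List.getElem?_append_right (by simp [hbin])]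
      simp [hbin]
    | succ k =>
      rw [List.getElem?_append_right (by rw [hblock]; nlinarith), hblock,
        show (k + 1) * (ℓ + 1) + ℓ - (ℓ + 1) = k * (ℓ + 1) + ℓ by rw [Nat.succ_mul]; omega]
      exact ih (by simpa using hk)

theorem san_getElem?_of_le {w : List α} {i : ℕ} (h₁ : (ℓ + 1) * w.length ≤ i)
    (h₂ : i < (ℓ + 1) * w.length + (ℓ + 1)) : (san bin ℓ w)[i]? = some true := by
  rw [san, List.getElem?_append_right (by rw [length_flatten_map_bin_append hbin]; omega),
    List.getElem?_replicate, length_flatten_map_bin_append hbin, if_pos (by omega)]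

end San

theorem stmt14_general {α : Type*} (ℓ : ℕ) (bin : α → List Bool)
    (hbin : ∀ σ : α, (bin σ).length = ℓ) (w : List α) :
    ∀ p q : ℕ, p < q → ℓ + 1 ≤ ((san bin ℓ w).drop q).length →
      ¬ ((san bin ℓ w).drop q <+: (san bin ℓ w).drop p) := by
  intro p q hpq hlen hpre
  rw [List.length_drop, length_san hbin] at hlen
  set N := (ℓ + 1) * w.length
  obtain ⟨k, hk, hleft, hright⟩ :=
    Nat.exists_lt_mul_add_mem_Icc (a := N - (q - p)) (m := ℓ) (n := w.length) (by omega)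
  set f := k * (ℓ + 1) + ℓ
  have hperiod : (san bin ℓ w)[f]? = (san bin ℓ w)[f + (q - p)]? := by
    have := List.getElem?_add_eq_of_drop_prefix (j := f - p) hpre (by rw [length_san hbin]; omega)
    rwa [show p + (f - p) = f by omega, show q + (f - p) = f + (q - p) by omega] at this
  rw [san_getElem?_separator hbin hk, san_getElem?_of_le hbin (by omega) (by omega)] at hperiod
  exact Bool.false_ne_true (Option.some_injective _ hperiod)

theorem stmt14 {α : Type*} (ℓ : ℕ) (hℓ : 1 ≤ ℓ) (bin : α → List Bool)
    (hbin : ∀ σ : α, (bin σ).length = ℓ) (w : List α) :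
    ∀ p q : ℕ, p < q → ℓ + 1 ≤ ((san bin ℓ w).drop q).length →
      ¬ ((san bin ℓ w).drop q <+: (san bin ℓ w).drop p) :=
  stmt14_general ℓ bin hbin w
end

section
/- Let Σ be an alphabet, let ℓ ≥ 1, and let bin : Σ → List Bool be an injective function such that every value bin σ has length ℓ. Define the map h on words over Σ by h(w) := the concatenation, over the letters σ of w in order, of bin σ ++ [false], and define san(w) := h(w) ++ (the list consisting of ℓ+1 copies of true). Let A, B, C, D ⊆ Σ* be languages. Then for every word w over Σ, the following are equivalent: (1) there exist a ∈ A, b ∈ B, c ∈ C, d ∈ D with w = a ++ b ++ c ++ b ++ d; (2) there exist a' in the image of A under h, b' in the image of B under h, c' in the image of C under h, and d' in the image of D under h, such that san(w) = a' ++ b' ++ c' ++ b' ++ (d' ++ (the list consisting of ℓ+1 copies of true)). -/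
/-- The letterwise encoding: each letter `σ` is replaced by `bin σ ++ [false]`. -/
def binMap {α : Type*} (bin : α → List Bool) (w : List α) : List Bool :=
  (w.map fun σ => bin σ ++ [false]).flatten

lemma binMap_append {α : Type*} (bin : α → List Bool) (u v : List α) :
    binMap bin (u ++ v) = binMap bin u ++ binMap bin v := by
  simp [binMap]

lemma binMap_inj {α : Type*} {ℓ : ℕ} {bin : α → List Bool}
    (hinj : Function.Injective bin) (hbin : ∀ σ : α, (bin σ).length = ℓ) :
    Function.Injective (binMap bin) := by
  intro u v h
  induction u generalizing v with
  | nil =>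
    cases v with
    | nil => rfl
    | cons y v => simp [binMap] at h
  | cons x u ih =>
    cases v with
    | nil => simp [binMap] at h
    | cons y v =>
      simp only [binMap, List.map_cons, List.flatten_cons, List.append_assoc] at h
      obtain ⟨h1, h2⟩ := List.append_inj h (by rw [hbin, hbin])
      simp only [List.singleton_append, List.cons.injEq] at h2
      rw [hinj h1, ih h2.2]

theorem stmt15 {α : Type*} (ℓ : ℕ) (hℓ : 1 ≤ ℓ) (bin : α → List Bool)
    (hinj : Function.Injective bin) (hbin : ∀ σ : α, (bin σ).length = ℓ)
    (A B C D : Set (List α)) (w : List α) :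
    (∃ a ∈ A, ∃ b ∈ B, ∃ c ∈ C, ∃ d ∈ D, w = a ++ b ++ c ++ b ++ d) ↔
      (∃ a' ∈ binMap bin '' A, ∃ b' ∈ binMap bin '' B, ∃ c' ∈ binMap bin '' C,
        ∃ d' ∈ binMap bin '' D,
        binMap bin w ++ List.replicate (ℓ + 1) true =
          a' ++ b' ++ c' ++ b' ++ (d' ++ List.replicate (ℓ + 1) true)) := by
  constructor
  · rintro ⟨a, ha, b, hb, c, hc, d, hd, rfl⟩
    exact ⟨_, ⟨a, ha, rfl⟩, _, ⟨b, hb, rfl⟩, _, ⟨c, hc, rfl⟩, _, ⟨d, hd, rfl⟩,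
      by simp [binMap_append]⟩
  · rintro ⟨_, ⟨a, ha, rfl⟩, _, ⟨b, hb, rfl⟩, _, ⟨c, hc, rfl⟩, _, ⟨d, hd, rfl⟩, heq⟩
    refine ⟨a, ha, b, hb, c, hc, d, hd, binMap_inj hinj hbin ?_⟩
    have : binMap bin w ++ List.replicate (ℓ + 1) true =
        binMap bin (a ++ b ++ c ++ b ++ d) ++ List.replicate (ℓ + 1) true := by
      simp only [binMap_append, List.append_assoc]
      simpa [List.append_assoc] using heq
    exact List.append_cancel_right this
end
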